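/- Let M ∈ (1/2)ℤ_{>0} and s ∈ (1/2)ℤ, and define Ψ̃^{[M;s]}(τ, z₁, z₂, t) = e^{−2πi M t} (Φ̃^{+[M;s]}(τ, z₁, z₂) − Φ̃^{+[M;s]}(τ, −z₂, −z₁)). Then for every τ with Im τ > 0, every t ∈ ℂ, and all z₁, z₂ ∈ ℂ with z₁ ∉ ℤ + 2ℤτ and z₂ ∉ ℤ + 2ℤτ, one has 2 Ψ̃^{[M;s]}(2τ, z₁, z₂, t) = Ψ̃^{[2M;2s]}(τ, z₁/2, z₂/2, t/2) + e^{−2πi s} Ψ̃^{[2M;2s]}(τ, (z₁+1)/2, (z₂−1)/2, t/2). -/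

import Mathlib

/-!
The identity splits into one for the holomorphic part Φ and one for the modifier Φ_add, and Ψ̃
is a difference of two Φ̃'s, each doubled separately.

For Φ, put u = e^{πi z₁} q^n. The n-th term of Φ^{[M;s]}(2τ, z₁, z₂) has denominator 1 - u², and
the numerators of the n-th terms of Φ^{[2M;2s]}(τ, z₁/2, z₂/2) and
e^{-πis} Φ^{[2M;2s]}(τ, (z₁+1)/2, (z₂-1)/2) are the same, while their denominators are 1 - u and
1 + u. So the series identity is the partial fraction 2/(1 - u²) = 1/(1 - u) + 1/(1 + u), applied
termwise. The series converge because the numerators are Jacobi theta terms and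
1/(1 - e^{2πiz} q^n) is bounded in n.

For Φ_add, R and Θ are unchanged under (j, m, τ, z) ↦ (j/2, m/2, 2τ, 2z), and shifting the
argument of R_{j,2M} by 1/2 multiplies it by e^{πij}. With j = 2s + i the second summand is the
first one with the sign (-1)^i, so the odd i cancel and the even i = 2i' give twice
Φ_add^{[M;s]}(2τ, z₁, z₂).
-/

noncomputable section

open Complex

/-- `mexp w = e^{2πi w}`. -/
def mexp (w : ℂ) : ℂ := Complex.exp (2 * (Real.pi : ℂ) * Complex.I * w)

/-- The signed mock theta function `Φ^{sgn[m;s]}(τ,z₁,z₂)`. -/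
def PhiS (sgn : ℂ) (m s : ℝ) (τ z₁ z₂ : ℂ) : ℂ :=
  ∑' n : ℤ, sgn ^ n *
    mexp ((m : ℂ) * n * (z₁ + z₂) + (s : ℂ) * z₁ + τ * ((m : ℂ) * n ^ 2 + (s : ℂ) * n)) /
    (1 - mexp (z₁ + n * τ))

/-- The signed theta function `Θ^{sgn}_{j,m}(τ,z)`. -/
def ThetaS (sgn : ℂ) (j m : ℝ) (τ z : ℂ) : ℂ :=
  ∑' n : ℤ, sgn ^ n *
    mexp ((m : ℂ) * z * ((n : ℂ) + ((j / (2 * m) : ℝ) : ℂ)) +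
      τ * (m : ℂ) * ((n : ℂ) + ((j / (2 * m) : ℝ) : ℂ)) ^ 2)

/-- `E(x) = 2∫₀ˣ e^{-πu²} du`. -/
def Efun (x : ℝ) : ℝ := 2 * ∫ u in (0:ℝ)..x, Real.exp (-Real.pi * u ^ 2)

/-- `ψ_{m,n}(τ,z) = (n - 2m Im z / Im τ) √(Im τ / m)`. -/
def psiMN (m n : ℝ) (τ z : ℂ) : ℝ := (n - 2 * m * z.im / τ.im) * Real.sqrt (τ.im / m)

/-- The real-analytic correction `R^{sgn}_{j,m}(τ,z)`; the summation variable `n ∈ j + 2mℤ`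
is written as `n = j + 2mk`, `k ∈ ℤ`, so that `(±1)^{(n-j)/(2m)} = sgn^k`. -/
def RS (sgn : ℂ) (j m : ℝ) (τ z : ℂ) : ℂ :=
  ∑' k : ℤ, sgn ^ k *
    (((Real.sign (j + 2 * m * k - 1 / 2 - j + 2 * m) -
        Efun (psiMN m (j + 2 * m * k) τ z) : ℝ)) : ℂ) *
    Complex.exp (-(Real.pi : ℂ) * Complex.I * (((j + 2 * m * k : ℝ)) : ℂ) ^ 2 * τ / (2 * (m : ℂ))
      + 2 * (Real.pi : ℂ) * Complex.I * (((j + 2 * m * k : ℝ)) : ℂ) * z)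

/-- The modifier `Φ^{sgn[m;s]}_add`; the summation variable `j ∈ s + ℤ`, `s ≤ j < s + 2m`
is written as `j = s + i`, `0 ≤ i < ⌈2m⌉`. -/
def PhiAddS (sgn : ℂ) (m s : ℝ) (τ z₁ z₂ : ℂ) : ℂ :=
  ∑ i ∈ Finset.range ⌈2 * m⌉₊,
    RS sgn (s + i) m τ ((z₁ - z₂) / 2) * ThetaS sgn (s + i) m τ (z₁ + z₂)

/-- The modified (signed) mock theta function `Φ̃^{sgn[m;s]}`. -/
def PhiTilde (sgn : ℂ) (m s : ℝ) (τ z₁ z₂ : ℂ) : ℂ :=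
  PhiS sgn m s τ z₁ z₂ - (1 / 2) * PhiAddS sgn m s τ z₁ z₂

end

/-- `Ψ̃^{[M;s]}(τ,z₁,z₂,t) = e^{-2πiMt} (Φ̃^{+[M;s]}(τ,z₁,z₂) - Φ̃^{+[M;s]}(τ,-z₂,-z₁))`. -/
noncomputable def PsiTilde (M s : ℝ) (τ z₁ z₂ t : ℂ) : ℂ :=
  mexp (-(M : ℂ) * t) * (PhiTilde 1 M s τ z₁ z₂ - PhiTilde 1 M s τ (-z₂) (-z₁))

open Filter Topology Asymptotics

lemma mexp_add (a b : ℂ) : mexp (a + b) = mexp a * mexp b := by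
  rw [mexp, mexp, mexp, ← Complex.exp_add]; ring_nf

lemma mexp_intCast (k : ℤ) : mexp k = 1 := by
  rw [mexp, show 2 * (Real.pi : ℂ) * Complex.I * k = k * (2 * Real.pi * Complex.I) by ring,
    Complex.exp_int_mul_two_pi_mul_I]

lemma mexp_half : mexp (1 / 2) = -1 := by
  rw [mexp, show 2 * (Real.pi : ℂ) * Complex.I * (1 / 2) = Real.pi * Complex.I by ring,
    Complex.exp_pi_mul_I]

lemma mexp_eq_one_iff (w : ℂ) : mexp w = 1 ↔ ∃ k : ℤ, w = k := by
  have h2πi : 2 * (Real.pi : ℂ) * Complex.I ≠ 0 := by simp [Real.pi_ne_zero]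
  rw [mexp, Complex.exp_eq_one_iff]
  refine exists_congr fun k => ⟨fun hk => mul_left_cancel₀ h2πi (hk.trans (by ring)),
    fun hk => by rw [hk]; ring⟩

lemma norm_mexp (w : ℂ) : ‖mexp w‖ = Real.exp (-(2 * Real.pi * w.im)) := by
  simp [mexp, Complex.norm_exp, Complex.mul_re]

lemma mexp_eq_mul_jacobiTheta₂_term (m s : ℝ) (τ z₁ z₂ : ℂ) (n : ℤ) :
    mexp ((m : ℂ) * n * (z₁ + z₂) + (s : ℂ) * z₁ + τ * ((m : ℂ) * n ^ 2 + (s : ℂ) * n)) =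
      mexp (s * z₁) * jacobiTheta₂_term n (m * (z₁ + z₂) + s * τ) (2 * m * τ) := by
  rw [jacobiTheta₂_term, mexp, mexp, ← Complex.exp_add]
  ring_nf

section

variable {τ : ℂ} (z : ℂ)

lemma norm_mexp_add_intCast_mul (n : ℤ) :
    ‖mexp (z + n * τ)‖ = Real.exp ((-(2 * Real.pi * τ.im)) * n + -(2 * Real.pi * z.im)) := by
  rw [norm_mexp]
  congr 1
  simp only [Complex.add_im, Complex.mul_im, Complex.intCast_re, Complex.intCast_im, zero_mul,
    add_zero]
  ring

lemma tendsto_mexp_add_mul_atTop (hτ : 0 < τ.im) :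
    Tendsto (fun n : ℤ => mexp (z + n * τ)) atTop (𝓝 0) := by
  have hc : -(2 * Real.pi * τ.im) < 0 := by nlinarith [Real.pi_pos]
  rw [tendsto_zero_iff_norm_tendsto_zero]
  simp only [norm_mexp_add_intCast_mul]
  exact Real.tendsto_exp_atBot.comp (tendsto_atBot_add_const_right _ _
    (tendsto_intCast_atTop_atTop.const_mul_atTop_of_neg hc))

lemma tendsto_mexp_add_mul_atBot (hτ : 0 < τ.im) :
    Tendsto (fun n : ℤ => mexp (z + n * τ)) atBot (Bornology.cobounded ℂ) := by
  have hc : -(2 * Real.pi * τ.im) < 0 := by nlinarith [Real.pi_pos]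
  rw [← tendsto_norm_atTop_iff_cobounded]
  simp only [norm_mexp_add_intCast_mul]
  exact Real.tendsto_exp_atTop.comp (tendsto_atTop_add_const_right _ _
    (((tendsto_intCast_atBot_iff (R := ℝ)).2 tendsto_id).const_mul_atBot_of_neg hc))

lemma isBigO_inv_one_sub_mexp (hτ : 0 < τ.im) :
    (fun n : ℤ => (1 - mexp (z + n * τ))⁻¹) =O[cofinite] (fun _ => (1 : ℂ)) := by
  rw [Int.cofinite_eq, isBigO_sup]
  refine ⟨?_, ?_⟩
  · exact ((tendsto_inv₀_cobounded).comp ((tendsto_const_sub_cobounded 1).comp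
      (tendsto_mexp_add_mul_atBot z hτ))).isBigO_one ℂ
  · have : Tendsto (fun n : ℤ => (1 - mexp (z + n * τ))⁻¹) atTop (𝓝 (1 - 0)⁻¹) :=
      ((tendsto_mexp_add_mul_atTop z hτ).const_sub 1).inv₀ (by simp)
    exact this.isBigO_one ℂ

end

lemma summable_PhiS_term (m s : ℝ) (hm : 0 < m) (τ z₁ z₂ : ℂ) (hτ : 0 < τ.im) :
    Summable (fun n : ℤ =>
      mexp ((m : ℂ) * n * (z₁ + z₂) + (s : ℂ) * z₁ + τ * ((m : ℂ) * n ^ 2 + (s : ℂ) * n)) /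
        (1 - mexp (z₁ + n * τ))) := by
  have him : 0 < (2 * (m : ℂ) * τ).im := by
    simp only [Complex.mul_im, Complex.mul_re, Complex.re_ofNat, Complex.ofReal_re,
      Complex.im_ofNat, Complex.ofReal_im, mul_zero, sub_zero, zero_mul, add_zero]
    positivity
  have hθ : Summable fun n : ℤ =>
      mexp (s * z₁) * jacobiTheta₂_term n (m * (z₁ + z₂) + s * τ) (2 * m * τ) :=
    ((summable_jacobiTheta₂_term_iff _ _).2 him).mul_left _
  refine summable_of_isBigO' hθ ?_
  simp only [div_eq_mul_inv, mexp_eq_mul_jacobiTheta₂_term]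
  simpa using (isBigO_refl _ _).mul (isBigO_inv_one_sub_mexp z₁ hτ)

lemma mexp_add_intCast_mul_ne_one {τ z : ℂ} (hz : ∀ a b : ℤ, z ≠ (a : ℂ) + 2 * (b : ℂ) * τ)
    (n : ℤ) : mexp (z + n * (2 * τ)) ≠ 1 := by
  rw [Ne, mexp_eq_one_iff]
  rintro ⟨k, hk⟩
  exact hz k (-n) (by push_cast; linear_combination hk)

lemma PhiS_one_doubling (m s : ℝ) (hm : 0 < m) (τ z₁ z₂ : ℂ) (hτ : 0 < τ.im)
    (hz₁ : ∀ a b : ℤ, z₁ ≠ (a : ℂ) + 2 * (b : ℂ) * τ) :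
    2 * PhiS 1 (m / 2) (s / 2) (2 * τ) z₁ z₂ =
      PhiS 1 m s τ (z₁ / 2) (z₂ / 2) +
        mexp (-(s / 2)) * PhiS 1 m s τ ((z₁ + 1) / 2) ((z₂ - 1) / 2) := by
  simp only [PhiS, one_zpow, one_mul]
  rw [← tsum_mul_left, ← tsum_mul_left, ← (summable_PhiS_term m s hm τ _ _ hτ).tsum_add
    ((summable_PhiS_term m s hm τ _ _ hτ).mul_left _)]
  refine tsum_congr fun n => ?_
  set u := mexp (z₁ / 2 + n * τ)
  have hsq : mexp (z₁ + n * (2 * τ)) = u ^ 2 := by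
    rw [sq, ← mexp_add]; ring_nf
  have hneg : mexp ((z₁ + 1) / 2 + n * τ) = -u := by
    rw [show (z₁ + 1) / 2 + n * τ = z₁ / 2 + n * τ + 1 / 2 by ring, mexp_add, mexp_half,
      mul_neg_one]
  have hu : 1 - u ^ 2 ≠ 0 := hsq ▸ sub_ne_zero.2 (mexp_add_intCast_mul_ne_one hz₁ n).symm
  have hu₁ : 1 - u ≠ 0 := fun h => hu (by linear_combination (1 + u) * h)
  have hu₂ : 1 + u ≠ 0 := fun h => hu (by linear_combination (1 - u) * h)
  set N := mexp (((m / 2 : ℝ) : ℂ) * n * (z₁ + z₂) + ((s / 2 : ℝ) : ℂ) * z₁ +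
    2 * τ * (((m / 2 : ℝ) : ℂ) * n ^ 2 + ((s / 2 : ℝ) : ℂ) * n))
  have hN₁ : mexp ((m : ℂ) * n * (z₁ / 2 + z₂ / 2) + (s : ℂ) * (z₁ / 2) +
      τ * ((m : ℂ) * n ^ 2 + (s : ℂ) * n)) = N := by
    congr 1; push_cast; ring
  have hN₂ : mexp (-(s / 2)) * mexp ((m : ℂ) * n * ((z₁ + 1) / 2 + (z₂ - 1) / 2) +
      (s : ℂ) * ((z₁ + 1) / 2) + τ * ((m : ℂ) * n ^ 2 + (s : ℂ) * n)) = N := by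
    rw [← mexp_add]; congr 1; push_cast; ring
  rw [hsq, hneg, hN₁, mul_div_assoc' (mexp _), hN₂, sub_neg_eq_add]
  field_simp
  ring

lemma ThetaS_doubling (sgn : ℂ) (j m : ℝ) (τ z : ℂ) :
    ThetaS sgn j m τ z = ThetaS sgn (j / 2) (m / 2) (2 * τ) (2 * z) := by
  rw [ThetaS, ThetaS, show j / 2 / (2 * (m / 2)) = j / (2 * m) by ring]
  refine tsum_congr fun n => ?_
  congr 2
  push_cast
  ring

lemma psiMN_doubling (m n : ℝ) (τ z : ℂ) :
    psiMN (m / 2) (n / 2) (2 * τ) (2 * z) = psiMN m n τ z := by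
  have hsqrt : Real.sqrt (2 * τ.im / (m / 2)) = 2 * Real.sqrt (τ.im / m) := by
    rw [show 2 * τ.im / (m / 2) = 2 ^ 2 * (τ.im / m) by ring, Real.sqrt_mul (by positivity),
      Real.sqrt_sq zero_le_two]
  simp only [psiMN, Complex.re_ofNat, Complex.im_ofNat, Complex.mul_im, zero_mul, add_zero, hsqrt]
  ring

lemma sign_doubling {m : ℝ} (hm : 1 / 2 < m) (k : ℤ) :
    Real.sign (m * (k + 1) - 1 / 2) = Real.sign (2 * m * (k + 1) - 1 / 2) := by
  rcases le_or_gt 0 k with hk | hk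
  · have hk' : (0 : ℝ) ≤ k := by exact_mod_cast hk
    rw [Real.sign_of_pos (by nlinarith), Real.sign_of_pos (by nlinarith)]
  · have hk' : (k : ℝ) + 1 ≤ 0 := by exact_mod_cast hk
    rw [Real.sign_of_neg (by nlinarith), Real.sign_of_neg (by nlinarith)]

lemma RS_doubling (sgn : ℂ) (j : ℝ) {m : ℝ} (hm : 1 / 2 < m) (τ z : ℂ) :
    RS sgn j m τ z = RS sgn (j / 2) (m / 2) (2 * τ) (2 * z) := by
  have hm₀ : (m : ℂ) ≠ 0 := Complex.ofReal_ne_zero.2 (by linarith)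
  rw [RS, RS]
  refine tsum_congr fun k => ?_
  have hn : j / 2 + 2 * (m / 2) * k = (j + 2 * m * k) / 2 := by ring
  rw [hn, psiMN_doubling, show (j + 2 * m * k) / 2 - 1 / 2 - j / 2 + 2 * (m / 2) =
      m * (k + 1) - 1 / 2 by ring, sign_doubling hm,
    show j + 2 * m * k - 1 / 2 - j + 2 * m = 2 * m * (k + 1) - 1 / 2 by ring]
  congr 2
  push_cast
  field_simp

lemma RS_add_half (sgn : ℂ) (j : ℝ) (M : ℤ) (τ z : ℂ) :
    RS sgn j M τ (z + 1 / 2) = mexp (j / 2) * RS sgn j M τ z := by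
  rw [RS, RS, ← tsum_mul_left]
  refine tsum_congr fun k => ?_
  have him : (z + 1 / 2).im = z.im := by simp
  set n : ℝ := j + 2 * M * k
  have hphase : ∀ A : ℂ, Complex.exp (A + 2 * Real.pi * Complex.I * n * (z + 1 / 2)) =
      mexp (j / 2) * Complex.exp (A + 2 * Real.pi * Complex.I * n * z) := fun A => by
    rw [show mexp (j / 2) = mexp (j / 2 + (M * k : ℤ)) by rw [mexp_add, mexp_intCast, mul_one],
      mexp, ← Complex.exp_add]
    congr 1
    simp only [n]
    push_cast
    ring
  rw [psiMN, psiMN, him, hphase]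
  ring

lemma mexp_natCast_div_two (i : ℕ) : mexp (i / 2) = (-1) ^ i := by
  rw [← mexp_half, mexp, mexp, ← Complex.exp_nat_mul]
  ring_nf

lemma Finset.sum_range_two_mul {β : Type*} [AddCommMonoid β] (n : ℕ) (f : ℕ → β) :
    ∑ i ∈ Finset.range (2 * n), f i = ∑ i ∈ Finset.range n, (f (2 * i) + f (2 * i + 1)) := by
  induction n with
  | zero => simp
  | succ k ih =>
    rw [show 2 * (k + 1) = 2 * k + 1 + 1 by ring, Finset.sum_range_succ, Finset.sum_range_succ, ih,
      Finset.sum_range_succ, add_assoc]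

lemma PhiAddS_doubling (sgn : ℂ) (M : ℤ) (hM : 0 < M) (s : ℝ) (τ z₁ z₂ : ℂ) :
    2 * PhiAddS sgn (M / 2) (s / 2) (2 * τ) z₁ z₂ =
      PhiAddS sgn M s τ (z₁ / 2) (z₂ / 2) +
        mexp (-(s / 2)) * PhiAddS sgn M s τ ((z₁ + 1) / 2) ((z₂ - 1) / 2) := by
  obtain ⟨N, rfl⟩ := Int.eq_ofNat_of_zero_le hM.le
  have hM₁ : (1 / 2 : ℝ) < ((N : ℤ) : ℝ) := by
    have : (1 : ℝ) ≤ ((N : ℤ) : ℝ) := by exact_mod_cast hM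
    linarith
  have hceil : ⌈2 * ((N : ℤ) : ℝ)⌉₊ = 2 * N := by
    rw [Int.cast_natCast, ← Nat.cast_ofNat, ← Nat.cast_mul, Nat.ceil_natCast]
  set w := (z₁ / 2 - z₂ / 2) / 2
  set v := z₁ / 2 + z₂ / 2
  set f : ℕ → ℂ := fun i => RS sgn (s + i) (N : ℤ) τ w * ThetaS sgn (s + i) (N : ℤ) τ v
  have hΦ : PhiAddS sgn (N : ℤ) s τ (z₁ / 2) (z₂ / 2) = ∑ i ∈ Finset.range (2 * N), f i := by
    rw [PhiAddS, hceil]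
  have hΦ' : mexp (-(s / 2)) * PhiAddS sgn (N : ℤ) s τ ((z₁ + 1) / 2) ((z₂ - 1) / 2) =
      ∑ i ∈ Finset.range (2 * N), (-1) ^ i * f i := by
    rw [PhiAddS, hceil, Finset.mul_sum]
    refine Finset.sum_congr rfl fun i _ => ?_
    rw [show ((z₁ + 1) / 2 - (z₂ - 1) / 2) / 2 = w + 1 / 2 by ring,
      show (z₁ + 1) / 2 + (z₂ - 1) / 2 = v by ring, RS_add_half, ← mul_assoc, ← mul_assoc,
      ← mexp_add, show -((s : ℂ) / 2) + ((s + i : ℝ) : ℂ) / 2 = (i : ℂ) / 2 by push_cast; ring,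
      mexp_natCast_div_two, mul_assoc]
  have hΦ₂ : PhiAddS sgn (((N : ℤ) : ℝ) / 2) (s / 2) (2 * τ) z₁ z₂ =
      ∑ i ∈ Finset.range N, f (2 * i) := by
    rw [PhiAddS, mul_div_cancel₀ _ two_ne_zero,
      show ⌈((N : ℤ) : ℝ)⌉₊ = N by rw [Int.cast_natCast, Nat.ceil_natCast]]
    refine Finset.sum_congr rfl fun i _ => ?_
    simp only [f]
    rw [RS_doubling _ _ hM₁, ThetaS_doubling sgn _ ((N : ℤ) : ℝ),
      show 2 * w = (z₁ - z₂) / 2 by ring, show 2 * v = z₁ + z₂ by ring,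
      show (s + ((2 * i : ℕ) : ℝ)) / 2 = s / 2 + i by push_cast; ring]
  rw [hΦ, hΦ', hΦ₂, ← Finset.sum_add_distrib, Finset.sum_range_two_mul, Finset.mul_sum]
  refine Finset.sum_congr rfl fun i _ => ?_
  simp only [pow_succ, pow_mul]
  ring

lemma PhiTilde_one_doubling (M : ℤ) (hM : 0 < M) (s : ℝ) (τ z₁ z₂ : ℂ) (hτ : 0 < τ.im)
    (hz₁ : ∀ a b : ℤ, z₁ ≠ (a : ℂ) + 2 * (b : ℂ) * τ) :
    2 * PhiTilde 1 (M / 2) (s / 2) (2 * τ) z₁ z₂ =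
      PhiTilde 1 M s τ (z₁ / 2) (z₂ / 2) +
        mexp (-(s / 2)) * PhiTilde 1 M s τ ((z₁ + 1) / 2) ((z₂ - 1) / 2) := by
  simp only [PhiTilde]
  linear_combination PhiS_one_doubling M s (by exact_mod_cast hM) τ z₁ z₂ hτ hz₁ -
    (1 / 2) * PhiAddS_doubling 1 M hM s τ z₁ z₂

/-- the doubling identity
`2 Ψ̃^{[M;s]}(2τ,z₁,z₂,t) = Ψ̃^{[2M;2s]}(τ,z₁/2,z₂/2,t/2)
  + e^{-2πis} Ψ̃^{[2M;2s]}(τ,(z₁+1)/2,(z₂-1)/2,t/2)`,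
with `M = M2/2 ∈ (1/2)ℤ_{>0}`, `s = s2/2 ∈ (1/2)ℤ`, for `z₁, z₂ ∉ ℤ + 2ℤτ`. -/
theorem stmt19 (M2 : ℤ) (hM2 : 0 < M2) (s2 : ℤ) (τ z₁ z₂ t : ℂ) (hτ : 0 < τ.im)
    (hz₁ : ∀ a b : ℤ, z₁ ≠ (a : ℂ) + 2 * (b : ℂ) * τ)
    (hz₂ : ∀ a b : ℤ, z₂ ≠ (a : ℂ) + 2 * (b : ℂ) * τ) :
    2 * PsiTilde ((M2 : ℝ) / 2) ((s2 : ℝ) / 2) (2 * τ) z₁ z₂ t =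
      PsiTilde (M2 : ℝ) (s2 : ℝ) τ (z₁ / 2) (z₂ / 2) (t / 2) +
        mexp (-((s2 : ℂ) / 2)) * PsiTilde (M2 : ℝ) (s2 : ℝ) τ ((z₁ + 1) / 2) ((z₂ - 1) / 2) (t / 2) := by
  have hz₂' : ∀ a b : ℤ, -z₂ ≠ (a : ℂ) + 2 * (b : ℂ) * τ := fun a b h =>
    hz₂ (-a) (-b) (by push_cast; linear_combination -h)
  have h₁ := PhiTilde_one_doubling M2 hM2 s2 τ z₁ z₂ hτ hz₁
  have h₂ := PhiTilde_one_doubling M2 hM2 s2 τ (-z₂) (-z₁) hτ hz₂'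
  rw [neg_div, neg_div, show (-z₂ + 1) / 2 = -((z₂ - 1) / 2) by ring,
    show (-z₁ - 1) / 2 = -((z₁ + 1) / 2) by ring] at h₂
  have ht : mexp (-(((M2 : ℝ) / 2 : ℝ) : ℂ) * t) = mexp (-((M2 : ℝ) : ℂ) * (t / 2)) := by
    congr 1; push_cast; ring
  simp only [PsiTilde, ht]
  rw [Complex.ofReal_intCast] at h₁ h₂
  linear_combination mexp (-((M2 : ℝ) : ℂ) * (t / 2)) * (h₁ - h₂)
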